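/- Let n ≥ 1, θ ∈ ℝ and Λ ∈ Γ_n. For 1 ≤ r ≤ n let Q_r denote the orthogonal projection of ℓ²(Fin n × ℕ) onto the closed span of {e_{(r,m)} : m ∈ ℕ}. Then a compact operator K on ℓ²(Fin n × ℕ) belongs to 𝔇_{n,θ}^Λ if and only if K commutes with Q_r for every r. In particular, the set of compact operators lying in 𝔇_{n,θ}^Λ coincides with the set of block-diagonal compact operators (a copy of 𝒦^{⊕n}) and is a closed two-sided ideal of 𝔇_{n,θ}^Λ. -/

import Mathlib

/-!
Statement 0: characterization of the compact operators lying in the C*-algebra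
𝔇_{n,θ}^Λ generated by the pair of twisted isometries (T₁, T₂) on ℓ²(Fin n × ℕ):
a compact operator K belongs to 𝔇_{n,θ}^Λ iff K commutes with each diagonal-block
projection Q_r; moreover the compacts in 𝔇_{n,θ}^Λ form a closed two-sided ideal.
-/

open Complex

noncomputable section

/-- ℓ² space over an index set `I`, with values in ℂ. -/
abbrev ℓ2 (I : Type) : Type := lp (fun _ : I => ℂ) 2

/-- standard basis vector of `ℓ2 I`. -/
noncomputable def sv {I : Type} [DecidableEq I] (i : I) : ℓ2 I := lp.single 2 i 1

/-- The smallest closed *-subalgebra of B(H) containing a set `s` of operators. -/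
noncomputable def Cgen {H : Type} [NormedAddCommGroup H] [InnerProductSpace ℂ H]
    [CompleteSpace H] (s : Set (H →L[ℂ] H)) : StarSubalgebra ℂ (H →L[ℂ] H) :=
  (StarAlgebra.adjoin ℂ s).topologicalClosure


section Helpers

open Filter Topology

local notation "⟪" x ", " y "⟫" => @inner ℂ _ _ x y

variable {I : Type} [DecidableEq I]

lemma inner_sv_left (i : I) (x : ℓ2 I) : ⟪sv i, x⟫ = x i := by
  rw [sv, lp.inner_single_left]; simp [RCLike.inner_apply]

lemma inner_sv_sv (i j : I) : ⟪sv i, sv j⟫ = if i = j then 1 else 0 := by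
  rw [inner_sv_left, sv, lp.single_apply]
  simp [Pi.single_apply]

lemma sv_ext {x y : ℓ2 I} (h : ∀ i, ⟪sv i, x⟫ = ⟪sv i, y⟫) : x = y := by
  ext i
  simpa [inner_sv_left] using h i

lemma hasSum_sv (x : ℓ2 I) : HasSum (fun i => x i • sv i) x := by
  have := lp.hasSum_single (E := fun _ : I => ℂ) (p := 2) (by norm_num) x
  convert this using 2 with i
  rw [sv, ← lp.single_smul]
  norm_num

lemma clm_ext_sv {E : Type*} [NormedAddCommGroup E] [NormedSpace ℂ E]
    {A B : ℓ2 I →L[ℂ] E} (h : ∀ i, A (sv i) = B (sv i)) : A = B := by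
  ext x
  have hA := (hasSum_sv x).mapL A
  have hB := (hasSum_sv x).mapL B
  simp only [map_smul] at hA hB
  simp only [h] at hA
  exact hA.unique hB

lemma star_apply_sv (A : ℓ2 I →L[ℂ] ℓ2 I) (j : I) (w : ℓ2 I)
    (h : ∀ i, ⟪A (sv i), sv j⟫ = ⟪sv i, w⟫) : (star A) (sv j) = w := by
  apply sv_ext
  intro i
  rw [ContinuousLinearMap.star_eq_adjoint, ContinuousLinearMap.adjoint_inner_right]
  exact h i

lemma star_clm_sv {A B : ℓ2 I →L[ℂ] ℓ2 I}
    (h : ∀ i j, ⟪A (sv i), sv j⟫ = ⟪sv i, B (sv j)⟫) : star A = B :=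
  clm_ext_sv fun j => star_apply_sv A j (B (sv j)) (fun i => h i j)

/-- rank one operator `|sv i⟩⟨sv j|`. -/
noncomputable def rk (i j : I) : ℓ2 I →L[ℂ] ℓ2 I := (innerSL ℂ (sv j)).smulRight (sv i)

lemma rk_apply (i j : I) (x : ℓ2 I) : rk i j x = ⟪sv j, x⟫ • sv i := rfl

lemma rk_sv (i j k : I) : rk i j (sv k) = if j = k then sv i else 0 := by
  rw [rk_apply, inner_sv_sv]; split_ifs <;> simp

lemma star_rk (i j : I) : star (rk i j) = rk j i := by
  apply star_clm_sv
  intro a b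
  rw [rk_apply, rk_apply, inner_smul_left, inner_smul_right, inner_sv_sv, inner_sv_sv,
    inner_sv_sv]
  split_ifs with h1 h2 h3 h3 h2 h3 h3 <;>
    simp_all [map_one, mul_one, mul_zero, zero_mul, map_zero] <;> tauto

lemma Fs_apply (s : Finset I) (x : ℓ2 I) :
    (∑ i ∈ s, rk i i) x = ∑ i ∈ s, ⟪sv i, x⟫ • sv i := by
  simp [rk_apply]

lemma inner_Fs (s : Finset I) (x : ℓ2 I) :
    ⟪x - (∑ i ∈ s, rk i i) x, (∑ i ∈ s, rk i i) x⟫ = 0 := by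
  rw [inner_sub_left, Fs_apply, inner_sum, inner_sum]
  rw [sub_eq_zero]
  refine Finset.sum_congr rfl fun i hi => ?_
  rw [inner_smul_right, inner_smul_right, sum_inner]
  rw [Finset.sum_eq_single i]
  · rw [inner_smul_left, inner_sv_sv, if_pos rfl, mul_one, inner_conj_symm]
  · intro j hj hne
    rw [inner_smul_left, inner_sv_sv, if_neg hne, mul_zero]
  · intro h; exact absurd hi h

lemma norm_Fs_le (s : Finset I) (x : ℓ2 I) : ‖(∑ i ∈ s, rk i i) x‖ ≤ ‖x‖ ∧
    ‖x - (∑ i ∈ s, rk i i) x‖ ≤ ‖x‖ := by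
  set y := (∑ i ∈ s, rk i i) x with hy
  have horth : ⟪x - y, y⟫ = 0 := inner_Fs s x
  have hpyth : ‖x‖ ^ 2 = ‖x - y‖ ^ 2 + ‖y‖ ^ 2 := by
    have := norm_add_sq (𝕜 := ℂ) (x - y) y
    simp only [sub_add_cancel, horth, map_zero] at this
    simpa [pow_two] using this
  constructor
  · nlinarith [norm_nonneg x, norm_nonneg y, norm_nonneg (x - y)]
  · nlinarith [norm_nonneg x, norm_nonneg y, norm_nonneg (x - y)]

lemma tendsto_Fs (s : ℕ → Finset I) (hmono : Monotone s) (hex : ∀ i, ∃ N, i ∈ s N)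
    (x : ℓ2 I) : Tendsto (fun N => (∑ i ∈ s N, rk i i) x) atTop (𝓝 x) := by
  have h1 : Tendsto (fun t : Finset I => ∑ i ∈ t, x i • sv i) atTop (𝓝 x) := hasSum_sv x
  have h2 := h1.comp (tendsto_atTop_finset_of_monotone hmono hex)
  convert h2 using 2 with N
  simp [rk_apply, inner_sv_left, Function.comp]

variable {H : Type*} [NormedAddCommGroup H] [InnerProductSpace ℂ H] [CompleteSpace H]

omit [CompleteSpace H] in
lemma eig_pow {A : H →L[ℂ] H} {v : H} {μ : ℂ} (h : A v = μ • v) (k : ℕ) :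
    (A ^ k) v = μ ^ k • v := by
  induction k with
  | zero => simp
  | succ k ih =>
    rw [pow_succ, pow_succ, ContinuousLinearMap.mul_apply, h, map_smul, ih, smul_smul,
      mul_comm]

omit [CompleteSpace H] in
lemma eig_aeval {A : H →L[ℂ] H} {v : H} {μ : ℂ} (h : A v = μ • v) (p : Polynomial ℂ) :
    (Polynomial.aeval A p) v = p.eval μ • v := by
  induction p using Polynomial.induction_on' with
  | add p q hp hq =>
    rw [map_add, ContinuousLinearMap.add_apply, hp, hq, Polynomial.eval_add, add_smul]
  | monomial k c =>
    rw [Polynomial.aeval_monomial, Polynomial.eval_monomial, ContinuousLinearMap.mul_apply,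
      eig_pow h, map_smul]
    rw [Algebra.algebraMap_eq_smul_one]
    simp [smul_smul, mul_comm]

omit [CompleteSpace H] in
lemma aeval_mul_X_apply_zero {A : H →L[ℂ] H} {v : H} (h : A v = 0) (q : Polynomial ℂ) :
    (Polynomial.aeval A (q * Polynomial.X)) v = 0 := by
  rw [map_mul, Polynomial.aeval_X, ContinuousLinearMap.mul_apply, h, map_zero]

omit [InnerProductSpace ℂ H] [CompleteSpace H] in
lemma compact_right_tendsto [NormedSpace ℂ H]
    {C : H →L[ℂ] H} (hC : IsCompactOperator (⇑C)) (D : ℕ → (H →L[ℂ] H))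
    (hD1 : ∀ N, ‖D N‖ ≤ 1) (hD2 : ∀ x, Tendsto (fun N => D N x) atTop (𝓝 0)) :
    Tendsto (fun N => ‖D N ∘L C‖) atTop (𝓝 0) := by
  rw [Metric.tendsto_atTop]
  intro ε hε
  obtain ⟨Kset, hKc, hKsub⟩ :=
    IsCompactOperator.image_closedBall_subset_compact (f := (C : H →ₗ[ℂ] H)) hC 1
  have htb := hKc.totallyBounded
  rw [Metric.totallyBounded_iff] at htb
  obtain ⟨t, htfin, htcov⟩ := htb (ε/4) (by linarith)
  have hev : ∀ᶠ N in atTop, ∀ y ∈ t, ‖D N y‖ < ε/4 := by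
    rw [eventually_all_finite htfin]
    intro y _
    have := (hD2 y).eventually ((tendsto_norm_zero).eventually_lt_const
      (by linarith : (0:ℝ) < ε/4))
    exact this.mono fun N hN => hN
  obtain ⟨N₀, hN₀⟩ := hev.exists_forall_of_atTop
  refine ⟨N₀, fun N hN => ?_⟩
  rw [Real.dist_eq, sub_zero, _root_.abs_of_nonneg (norm_nonneg _)]
  have hbound : ∀ x : H, ‖x‖ ≤ 1 → ‖(D N) (C x)‖ ≤ ε/2 := by
    intro x hx
    have hCx : C x ∈ Kset := hKsub ⟨x, Metric.mem_closedBall.2 (by simpa using hx), rfl⟩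
    obtain ⟨y, hyt, hy⟩ : ∃ y ∈ t, dist (C x) y < ε/4 := by
      have := htcov hCx
      simpa using this
    calc ‖D N (C x)‖ = ‖D N (C x - y) + D N y‖ := by
          congr 1; rw [← map_add, sub_add_cancel]
    _ ≤ ‖D N (C x - y)‖ + ‖D N y‖ := norm_add_le _ _
    _ ≤ ‖D N‖ * ‖C x - y‖ + ε/4 := by
        have := (hN₀ N hN y hyt).le
        exact add_le_add ((D N).le_opNorm _) this
    _ ≤ 1 * (ε/4) + ε/4 := by
        have h1 := hD1 N
        have h2 : ‖C x - y‖ ≤ ε/4 := by rw [← dist_eq_norm] at *; exact (hy).le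
        have : ‖D N‖ * ‖C x - y‖ ≤ 1 * (ε/4) :=
          mul_le_mul h1 h2 (norm_nonneg _) zero_le_one
        linarith
    _ = ε/2 := by ring
  have : ‖D N ∘L C‖ ≤ ε/2 := by
    refine ContinuousLinearMap.opNorm_le_bound _ (by linarith) fun x => ?_
    rcases eq_or_ne x 0 with rfl | hx0
    · simp
    · set c : ℂ := ((‖x‖ : ℝ) : ℂ)⁻¹ with hc
      have hnc : ‖c‖ = ‖x‖⁻¹ := by
        rw [hc, norm_inv, Complex.norm_real, Real.norm_eq_abs,
          _root_.abs_of_nonneg (norm_nonneg x)]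
      have hu : ‖(c • x : H)‖ ≤ 1 := by
        rw [norm_smul, hnc]
        exact le_of_eq (inv_mul_cancel₀ (norm_ne_zero_iff.2 hx0))
      have hb := hbound _ hu
      rw [map_smul, map_smul, norm_smul, hnc] at hb
      have hxpos : (0:ℝ) < ‖x‖ := norm_pos_iff.2 hx0
      rw [ContinuousLinearMap.comp_apply]
      calc ‖D N (C x)‖ = ‖x‖ * (‖x‖⁻¹ * ‖D N (C x)‖) := by field_simp
      _ ≤ ‖x‖ * (ε/2) := mul_le_mul_of_nonneg_left hb (norm_nonneg x)
      _ = ε/2 * ‖x‖ := by ring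
  linarith

end Helpers

set_option maxHeartbeats 1000000
set_option synthInstance.maxHeartbeats 200000

theorem statement0 (n : ℕ) (hn : 1 ≤ n) (θ : ℝ) (Λ : Fin n → ℂ)
    (hΛunit : ∀ r, ‖Λ r‖ = 1) (hΛdist : Function.Injective Λ)
    (T₁ T₂ : ℓ2 (Fin n × ℕ) →L[ℂ] ℓ2 (Fin n × ℕ))
    (hT₁ : ∀ (r : Fin n) (m : ℕ), T₁ (sv (r, m)) = sv (r, m + 1))
    (hT₂ : ∀ (r : Fin n) (m : ℕ),
      T₂ (sv (r, m)) = (Λ r * Complex.exp (-(2 * Real.pi * Complex.I * θ * m))) • sv (r, m))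
    (Q : Fin n → (ℓ2 (Fin n × ℕ) →L[ℂ] ℓ2 (Fin n × ℕ)))
    (hQ : ∀ (r s : Fin n) (m : ℕ), Q r (sv (s, m)) = if s = r then sv (s, m) else 0) :
    (∀ K : ℓ2 (Fin n × ℕ) →L[ℂ] ℓ2 (Fin n × ℕ), IsCompactOperator K →
      (K ∈ Cgen {T₁, T₂} ↔ ∀ r, Commute K (Q r))) ∧
    IsClosed {x : Cgen {T₁, T₂} |
      IsCompactOperator (x : ℓ2 (Fin n × ℕ) →L[ℂ] ℓ2 (Fin n × ℕ))} ∧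
    (∀ a x : Cgen {T₁, T₂},
      IsCompactOperator (x : ℓ2 (Fin n × ℕ) →L[ℂ] ℓ2 (Fin n × ℕ)) →
      IsCompactOperator ((a * x : Cgen {T₁, T₂}) : ℓ2 (Fin n × ℕ) →L[ℂ] ℓ2 (Fin n × ℕ)) ∧
      IsCompactOperator ((x * a : Cgen {T₁, T₂}) : ℓ2 (Fin n × ℕ) →L[ℂ] ℓ2 (Fin n × ℕ))) := by
  classical
  have hT₁mem : T₁ ∈ Cgen {T₁, T₂} := by
    unfold Cgen
    exact StarSubalgebra.le_topologicalClosure (StarAlgebra.adjoin ℂ {T₁, T₂})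
      (StarAlgebra.subset_adjoin ℂ {T₁, T₂} (Set.mem_insert _ _))
  have hT₂mem : T₂ ∈ Cgen {T₁, T₂} := by
    unfold Cgen
    exact StarSubalgebra.le_topologicalClosure (StarAlgebra.adjoin ℂ {T₁, T₂})
      (StarAlgebra.subset_adjoin ℂ {T₁, T₂} (Set.mem_insert_of_mem _ rfl))
  have hclosed : IsClosed (Cgen {T₁, T₂} : Set (ℓ2 (Fin n × ℕ) →L[ℂ] ℓ2 (Fin n × ℕ))) := by
    unfold Cgen
    exact StarSubalgebra.isClosed_topologicalClosure _
  -- Q r is self-adjoint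
  have hQsa : ∀ r, star (Q r) = Q r := by
    intro r
    apply star_clm_sv
    rintro ⟨s, m⟩ ⟨t, k⟩
    rw [hQ, hQ]
    split_ifs with h1 h2 h2
    · rfl
    · rw [inner_zero_right, inner_sv_sv, if_neg]
      intro h
      exact h2 (by have h3 := congrArg Prod.fst h; simp only at h3; rw [← h3, h1])
    · rw [inner_zero_left, inner_sv_sv, if_neg]
      intro h
      exact h1 (by have h3 := congrArg Prod.fst h; simp only at h3; rw [h3, h2])
    · rw [inner_zero_left, inner_zero_right]
  -- T₁, T₂ commute with Q r
  have hT₁Q : ∀ r, T₁ * Q r = Q r * T₁ := by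
    intro r
    apply clm_ext_sv
    rintro ⟨s, m⟩
    rw [ContinuousLinearMap.mul_apply, ContinuousLinearMap.mul_apply, hQ, hT₁, hQ]
    split_ifs with h
    · exact hT₁ s m
    · simp
  have hT₂Q : ∀ r, T₂ * Q r = Q r * T₂ := by
    intro r
    apply clm_ext_sv
    rintro ⟨s, m⟩
    rw [ContinuousLinearMap.mul_apply, ContinuousLinearMap.mul_apply, hQ, hT₂, map_smul, hQ]
    split_ifs with h
    · exact hT₂ s m
    · simp
  -- forward direction: everything in Cgen commutes with Q r
  have hfwd : ∀ A ∈ Cgen {T₁, T₂}, ∀ r, A * Q r = Q r * A := by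
    intro A hA r
    have hcl : IsClosed {B : ℓ2 (Fin n × ℕ) →L[ℂ] ℓ2 (Fin n × ℕ) | B * Q r = Q r * B} :=
      isClosed_eq (continuous_mul_right (Q r)) (continuous_mul_left (Q r))
    have hsub : (StarAlgebra.adjoin ℂ {T₁, T₂} : Set _) ⊆
        {B : ℓ2 (Fin n × ℕ) →L[ℂ] ℓ2 (Fin n × ℕ) | B * Q r = Q r * B} := by
      intro B hB
      induction hB using StarAlgebra.adjoin_induction with
      | mem x hx =>
        simp only [Set.mem_insert_iff, Set.mem_singleton_iff] at hx
        rcases hx with rfl | rfl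
        · exact hT₁Q r
        · exact hT₂Q r
      | algebraMap c => exact Algebra.commutes c (Q r)
      | add x y hx hy ihx ihy => show _ = _; rw [add_mul, mul_add, ihx, ihy]
      | mul x y hx hy ihx ihy =>
        show _ = _
        rw [mul_assoc, ihy, ← mul_assoc, ihx, mul_assoc]
      | star x hx ih =>
        show star x * Q r = Q r * star x
        have := congrArg star ih
        rw [star_mul, star_mul, hQsa] at this
        exact this.symm
    have hA' : A ∈ closure (StarAlgebra.adjoin ℂ {T₁, T₂} : Set _) := hA
    exact closure_minimal hsub hcl hA'
  -- adjoint of T₁ on basis vectors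
  have hsT₁zero : ∀ r : Fin n, (star T₁) (sv (r, 0)) = 0 := by
    intro r
    apply star_apply_sv
    rintro ⟨s, k⟩
    rw [hT₁, inner_sv_sv, inner_zero_right]
    simp [Prod.ext_iff]
  have hsT₁succ : ∀ (r : Fin n) (m : ℕ), (star T₁) (sv (r, m + 1)) = sv (r, m) := by
    intro r m
    apply star_apply_sv
    rintro ⟨s, k⟩
    rw [hT₁, inner_sv_sv, inner_sv_sv]
    simp [Prod.ext_iff]
  -- the diagonal operator D
  set D : ℓ2 (Fin n × ℕ) →L[ℂ] ℓ2 (Fin n × ℕ) := T₂ * (1 - T₁ * star T₁) with hD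
  have hDmem : D ∈ Cgen {T₁, T₂} :=
    mul_mem hT₂mem (sub_mem (one_mem _) (mul_mem hT₁mem (star_mem hT₁mem)))
  have hDzero : ∀ t : Fin n, D (sv (t, 0)) = Λ t • sv (t, 0) := by
    intro t
    rw [hD, ContinuousLinearMap.mul_apply, ContinuousLinearMap.sub_apply,
      ContinuousLinearMap.one_apply, ContinuousLinearMap.mul_apply, hsT₁zero, map_zero,
      sub_zero, hT₂]
    norm_num
  have hDsucc : ∀ (t : Fin n) (m : ℕ), D (sv (t, m + 1)) = 0 := by
    intro t m
    rw [hD, ContinuousLinearMap.mul_apply, ContinuousLinearMap.sub_apply,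
      ContinuousLinearMap.one_apply, ContinuousLinearMap.mul_apply, hsT₁succ, hT₁,
      sub_self, map_zero]
  -- spectral projections
  have hΛne : ∀ r, Λ r ≠ 0 := fun r => norm_ne_zero_iff.1 (by rw [hΛunit r]; norm_num)
  set pr : Fin n → Polynomial ℂ := fun r =>
    (Polynomial.C (((∏ s ∈ Finset.univ.erase r, (Λ r - Λ s)) * Λ r)⁻¹) *
      ∏ s ∈ Finset.univ.erase r, (Polynomial.X - Polynomial.C (Λ s))) * Polynomial.X with hpr
  set ER : Fin n → ℓ2 (Fin n × ℕ) →L[ℂ] ℓ2 (Fin n × ℕ) := fun r => Polynomial.aeval D (pr r)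
    with hER
  have hERmem : ∀ r, ER r ∈ Cgen {T₁, T₂} := by
    intro r
    have h1 : ER r ∈ Algebra.adjoin ℂ {D} := Polynomial.aeval_mem_adjoin_singleton ℂ D
    have h2 : Algebra.adjoin ℂ {D} ≤ (Cgen {T₁, T₂}).toSubalgebra :=
      Algebra.adjoin_le (Set.singleton_subset_iff.2 hDmem)
    exact h2 h1
  have hERzero : ∀ r t : Fin n, ER r (sv (t, 0)) = if t = r then sv (t, 0) else 0 := by
    intro r t
    rw [hER]
    simp only []
    rw [eig_aeval (hDzero t)]
    have heval : (pr r).eval (Λ t) =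
        ((∏ s ∈ Finset.univ.erase r, (Λ r - Λ s)) * Λ r)⁻¹ *
          (∏ s ∈ Finset.univ.erase r, (Λ t - Λ s)) * Λ t := by
      simp [hpr, Polynomial.eval_prod]
    rw [heval]
    by_cases ht : t = r
    · subst ht
      have hprodne : (∏ s ∈ Finset.univ.erase t, (Λ t - Λ s)) ≠ 0 := by
        rw [Finset.prod_ne_zero_iff]
        intro s hs
        have hst : s ≠ t := (Finset.mem_erase.1 hs).1
        exact sub_ne_zero.2 fun h => hst (hΛdist h.symm)
      rw [if_pos rfl]
      rw [mul_assoc, inv_mul_cancel₀ (mul_ne_zero hprodne (hΛne t)), one_smul]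
    · rw [if_neg ht]
      have : (∏ s ∈ Finset.univ.erase r, (Λ t - Λ s)) = 0 :=
        Finset.prod_eq_zero (Finset.mem_erase.2 ⟨ht, Finset.mem_univ t⟩) (sub_self (Λ t))
      rw [this, mul_zero, zero_mul, zero_smul]
  have hERsucc : ∀ (r t : Fin n) (m : ℕ), ER r (sv (t, m + 1)) = 0 := by
    intro r t m
    rw [hER]
    exact aeval_mul_X_apply_zero (hDsucc t m) _
  -- powers of T₁ and star T₁
  have hT₁pow : ∀ (m : ℕ) (t : Fin n) (j : ℕ), (T₁ ^ m) (sv (t, j)) = sv (t, j + m) := by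
    intro m
    induction m with
    | zero => intro t j; simp
    | succ m ih =>
      intro t j
      rw [pow_succ', ContinuousLinearMap.mul_apply, ih, hT₁]
      congr 2
  have hsT₁pow : ∀ (k : ℕ) (t : Fin n) (j : ℕ),
      ((star T₁) ^ k) (sv (t, j)) = if k ≤ j then sv (t, j - k) else 0 := by
    intro k
    induction k with
    | zero => intro t j; simp
    | succ k ih =>
      intro t j
      rw [pow_succ', ContinuousLinearMap.mul_apply, ih]
      by_cases h : k ≤ j
      · rw [if_pos h]
        by_cases hjk : j = k
        · subst hjk
          rw [Nat.sub_self, hsT₁zero, if_neg (by omega)]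
        · obtain ⟨d, hd⟩ : ∃ d, j - k = d + 1 := ⟨j - k - 1, by omega⟩
          rw [hd, hsT₁succ, if_pos (by omega)]
          congr 2
          omega
      · rw [if_neg h, map_zero, if_neg (by omega)]
  -- matrix units
  have hU : ∀ (r : Fin n) (m k : ℕ),
      (T₁ ^ m) * ER r * ((star T₁) ^ k) = rk (r, m) (r, k) := by
    intro r m k
    apply clm_ext_sv
    rintro ⟨t, j⟩
    rw [ContinuousLinearMap.mul_apply, ContinuousLinearMap.mul_apply, hsT₁pow, rk_sv]
    by_cases h : k ≤ j
    · rw [if_pos h]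
      by_cases hjk : j = k
      · subst hjk
        rw [Nat.sub_self, hERzero]
        by_cases htr : t = r
        · subst htr
          rw [if_pos rfl, if_pos rfl, hT₁pow, Nat.zero_add]
        · have hne : ¬ (((r, j) : Fin n × ℕ) = (t, j)) := by
            intro hh
            exact htr (congrArg Prod.fst hh).symm
          rw [if_neg htr, map_zero, if_neg hne]
      · have hne : ¬ (((r, k) : Fin n × ℕ) = (t, j)) := by
          intro hh
          have h2 := congrArg Prod.snd hh
          simp only at h2
          omega
        obtain ⟨d, hd⟩ : ∃ d, j - k = d + 1 := ⟨j - k - 1, by omega⟩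
        rw [hd, hERsucc, map_zero, if_neg hne]
    · have hne : ¬ (((r, k) : Fin n × ℕ) = (t, j)) := by
        intro hh
        have h2 := congrArg Prod.snd hh
        simp only at h2
        omega
      rw [if_neg h, map_zero, map_zero, if_neg hne]
  have hrkmem : ∀ (r : Fin n) (m k : ℕ), rk ((r, m) : Fin n × ℕ) (r, k) ∈ Cgen {T₁, T₂} := by
    intro r m k
    rw [← hU]
    exact mul_mem (mul_mem (pow_mem hT₁mem m) (hERmem r)) (pow_mem (star_mem hT₁mem) k)
  -- finite-rank projections
  set sN : ℕ → Finset (Fin n × ℕ) := fun N => Finset.univ ×ˢ Finset.range N with hsN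
  set FN : ℕ → ℓ2 (Fin n × ℕ) →L[ℂ] ℓ2 (Fin n × ℕ) := fun N => ∑ i ∈ sN N, rk i i with hFN
  have hFNmem : ∀ N, FN N ∈ Cgen {T₁, T₂} := by
    intro N
    exact sum_mem fun i _ => hrkmem i.1 i.2 i.2
  have hstarFN : ∀ N, star (FN N) = FN N := by
    intro N
    rw [hFN]
    simp only [star_sum, star_rk]
  have hFNsv : ∀ (N : ℕ) (t : Fin n) (j : ℕ),
      FN N (sv (t, j)) = if j < N then sv (t, j) else 0 := by
    intro N t j
    rw [hFN]
    simp only [ContinuousLinearMap.sum_apply, rk_sv]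
    rw [Finset.sum_ite_eq' (sN N) ((t, j) : Fin n × ℕ) sv]
    simp [hsN]
  -- the hard direction
  have hrev : ∀ K : ℓ2 (Fin n × ℕ) →L[ℂ] ℓ2 (Fin n × ℕ), IsCompactOperator ⇑K →
      (∀ r, K * Q r = Q r * K) → K ∈ Cgen {T₁, T₂} := by
    intro K hKc hKcomm
    have horth : ∀ (r t : Fin n) (m j : ℕ), r ≠ t →
        @inner ℂ _ _ (sv ((r, m) : Fin n × ℕ)) (K (sv (t, j))) = 0 := by
      intro r t m j hrt
      have h1 : K (sv (t, j)) = Q t (K (sv (t, j))) := by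
        conv_lhs => rw [show (sv ((t, j) : Fin n × ℕ)) = Q t (sv (t, j)) by
          rw [hQ, if_pos rfl]]
        calc K (Q t (sv (t, j))) = (K * Q t) (sv (t, j)) := rfl
        _ = (Q t * K) (sv (t, j)) := by rw [hKcomm t]
        _ = Q t (K (sv (t, j))) := rfl
      rw [h1]
      have h2 : @inner ℂ _ _ (sv ((r, m) : Fin n × ℕ)) (Q t (K (sv (t, j)))) =
          @inner ℂ _ _ (Q t (sv ((r, m) : Fin n × ℕ))) (K (sv (t, j))) := by
        conv_lhs => rw [← hQsa t, ContinuousLinearMap.star_eq_adjoint]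
        exact ContinuousLinearMap.adjoint_inner_right _ _ _
      rw [h2, hQ, if_neg hrt, inner_zero_left]
    set AN : ℕ → ℓ2 (Fin n × ℕ) →L[ℂ] ℓ2 (Fin n × ℕ) := fun N =>
      ∑ r : Fin n, ∑ m ∈ Finset.range N, ∑ k ∈ Finset.range N,
        (@inner ℂ _ _ (sv ((r, m) : Fin n × ℕ)) (K (sv (r, k)))) • rk (r, m) (r, k) with hAN
    have hANmem : ∀ N, AN N ∈ Cgen {T₁, T₂} := by
      intro N
      exact sum_mem fun r _ => sum_mem fun m _ => sum_mem fun k _ =>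
        SMulMemClass.smul_mem _ (hrkmem r m k)
    have hANFK : ∀ N, AN N = FN N * K * FN N := by
      intro N
      apply clm_ext_sv
      rintro ⟨t, j⟩
      rw [ContinuousLinearMap.mul_apply, ContinuousLinearMap.mul_apply, hFNsv]
      by_cases hj : j < N
      · rw [if_pos hj]
        have hrhs : FN N (K (sv (t, j))) =
            ∑ m ∈ Finset.range N, (@inner ℂ _ _ (sv ((t, m) : Fin n × ℕ)) (K (sv (t, j)))) •
              sv (t, m) := by
          rw [hFN]
          rw [Fs_apply]
          rw [hsN]
          rw [Finset.sum_product]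
          rw [Fintype.sum_eq_single t]
          intro r hr
          apply Finset.sum_eq_zero
          intro m _
          rw [horth r t m j hr, zero_smul]
        rw [hrhs, hAN]
        simp only [ContinuousLinearMap.sum_apply, ContinuousLinearMap.smul_apply, rk_sv]
        rw [Fintype.sum_eq_single t]
        · apply Finset.sum_congr rfl
          intro m _
          have : ∀ k ∈ Finset.range N,
              (@inner ℂ _ _ (sv ((t, m) : Fin n × ℕ)) (K (sv (t, k)))) •
                (if ((t, k) : Fin n × ℕ) = (t, j) then sv ((t, m) : Fin n × ℕ) else 0) =
              (if k = j then (@inner ℂ _ _ (sv ((t, m) : Fin n × ℕ)) (K (sv (t, j)))) •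
                sv ((t, m) : Fin n × ℕ) else 0) := by
            intro k _
            by_cases hk : k = j
            · subst hk; rw [if_pos rfl, if_pos rfl]
            · rw [if_neg (by simp [Prod.ext_iff]; tauto), if_neg hk, smul_zero]
          rw [Finset.sum_congr rfl this, Finset.sum_ite_eq' (Finset.range N) j]
          rw [if_pos (Finset.mem_range.2 hj)]
        · intro r hr
          apply Finset.sum_eq_zero
          intro m _
          apply Finset.sum_eq_zero
          intro k _
          rw [if_neg (by simp [Prod.ext_iff]; tauto), smul_zero]
      · rw [if_neg hj, map_zero, map_zero, hAN]
        simp only [ContinuousLinearMap.sum_apply, ContinuousLinearMap.smul_apply, rk_sv]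
        apply Finset.sum_eq_zero
        intro r _
        apply Finset.sum_eq_zero
        intro m _
        apply Finset.sum_eq_zero
        intro k hk
        rw [if_neg, smul_zero]
        simp only [Prod.ext_iff]
        rintro ⟨rfl, rfl⟩
        exact hj (Finset.mem_range.1 hk)
    -- convergence
    have hmono : Monotone sN := fun a b hab =>
      Finset.product_subset_product (subset_refl _) (Finset.range_subset_range.2 hab)
    have hex : ∀ i : Fin n × ℕ, ∃ N, i ∈ sN N := by
      rintro ⟨r, m⟩
      exact ⟨m + 1, by simp [hsN]⟩
    have hFNx : ∀ x, Filter.Tendsto (fun N => FN N x) Filter.atTop (nhds x) := by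
      intro x
      rw [hFN]
      exact tendsto_Fs sN hmono hex x
    set DN : ℕ → ℓ2 (Fin n × ℕ) →L[ℂ] ℓ2 (Fin n × ℕ) := fun N => 1 - FN N with hDN
    have hstarDN : ∀ N, star (DN N) = DN N := by
      intro N
      rw [hDN]
      simp only [star_sub, star_one, hstarFN]
    have hDNnorm : ∀ N, ‖DN N‖ ≤ 1 := by
      intro N
      refine ContinuousLinearMap.opNorm_le_bound _ zero_le_one fun x => ?_
      rw [one_mul, hDN]
      simp only [ContinuousLinearMap.sub_apply, ContinuousLinearMap.one_apply]
      exact (norm_Fs_le _ x).2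
    have hFNnorm : ∀ N, ‖FN N‖ ≤ 1 := by
      intro N
      refine ContinuousLinearMap.opNorm_le_bound _ zero_le_one fun x => ?_
      rw [one_mul, hFN]
      exact (norm_Fs_le _ x).1
    have hDNx : ∀ x, Filter.Tendsto (fun N => DN N x) Filter.atTop (nhds 0) := by
      intro x
      have h := (tendsto_const_nhds (x := x) (f := Filter.atTop (α := ℕ))).sub (hFNx x)
      rw [sub_self] at h
      convert h using 2 with N
      rfl
    have haN := compact_right_tendsto hKc DN hDNnorm hDNx
    have hKsK : IsCompactOperator ⇑(star K * K) := by
      have h : ⇑(star K * K) = ⇑(star K) ∘ ⇑K := rfl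
      rw [h]
      exact hKc.continuous_comp (star K).continuous
    have hbN := compact_right_tendsto hKsK DN hDNnorm hDNx
    have hbound : ∀ N, ‖K - FN N * K * FN N‖ ≤
        ‖DN N ∘L K‖ + Real.sqrt ‖DN N ∘L (star K * K)‖ := by
      intro N
      have hid : K - FN N * K * FN N = DN N * K + FN N * (K * DN N) := by
        rw [hDN]
        noncomm_ring
      have hKDN : ‖K * DN N‖ ≤ Real.sqrt ‖DN N ∘L (star K * K)‖ := by
        rw [Real.le_sqrt (norm_nonneg _) (norm_nonneg _)]
        have h1 : ‖K * DN N‖ ^ 2 = ‖star (K * DN N) * (K * DN N)‖ := by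
          rw [pow_two, ContinuousLinearMap.star_eq_adjoint]
          exact (ContinuousLinearMap.norm_adjoint_comp_self _).symm
        have h2 : star (K * DN N) * (K * DN N) = (DN N * (star K * K)) * DN N := by
          rw [star_mul, hstarDN]
          noncomm_ring
        rw [h1, h2]
        calc ‖(DN N * (star K * K)) * DN N‖ ≤ ‖DN N * (star K * K)‖ * ‖DN N‖ :=
              norm_mul_le _ _
        _ ≤ ‖DN N * (star K * K)‖ * 1 :=
              mul_le_mul_of_nonneg_left (hDNnorm N) (norm_nonneg _)
        _ = ‖DN N ∘L (star K * K)‖ := by rw [mul_one]; rfl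
      calc ‖K - FN N * K * FN N‖ = ‖DN N * K + FN N * (K * DN N)‖ := by rw [hid]
      _ ≤ ‖DN N * K‖ + ‖FN N * (K * DN N)‖ := norm_add_le _ _
      _ ≤ ‖DN N * K‖ + ‖FN N‖ * ‖K * DN N‖ := by
            exact add_le_add le_rfl (norm_mul_le _ _)
      _ ≤ ‖DN N * K‖ + 1 * ‖K * DN N‖ := by
            exact add_le_add le_rfl (mul_le_mul_of_nonneg_right (hFNnorm N) (norm_nonneg _))
      _ ≤ ‖DN N ∘L K‖ + Real.sqrt ‖DN N ∘L (star K * K)‖ := by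
            rw [one_mul]
            exact add_le_add (le_of_eq rfl) hKDN
    have hsum0 : Filter.Tendsto
        (fun N => ‖DN N ∘L K‖ + Real.sqrt ‖DN N ∘L (star K * K)‖) Filter.atTop (nhds 0) := by
      have h2 : Filter.Tendsto (fun N => Real.sqrt ‖DN N ∘L (star K * K)‖)
          Filter.atTop (nhds 0) := by
        have := (Real.continuous_sqrt.tendsto 0).comp hbN
        simpa [Real.sqrt_zero, Function.comp_def] using this
      simpa using haN.add h2
    have hKlim : Filter.Tendsto (fun N => FN N * K * FN N) Filter.atTop (nhds K) := by
      rw [tendsto_iff_norm_sub_tendsto_zero]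
      refine squeeze_zero (fun N => norm_nonneg _) (fun N => ?_) hsum0
      rw [norm_sub_rev]
      exact hbound N
    have hKcl : K ∈ closure (Cgen {T₁, T₂} : Set (ℓ2 (Fin n × ℕ) →L[ℂ] ℓ2 (Fin n × ℕ))) := by
      refine mem_closure_of_tendsto hKlim (Filter.Eventually.of_forall fun N => ?_)
      rw [← hANFK N]
      exact hANmem N
    rwa [hclosed.closure_eq] at hKcl
  refine ⟨fun K hK => ⟨fun hKmem r => hfwd K hKmem r, fun hc => hrev K hK fun r => hc r⟩,
    ?_, ?_⟩
  · have hset : {x : Cgen {T₁, T₂} |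
        IsCompactOperator (x : ℓ2 (Fin n × ℕ) →L[ℂ] ℓ2 (Fin n × ℕ))} =
        (Subtype.val) ⁻¹'
          {A : ℓ2 (Fin n × ℕ) →L[ℂ] ℓ2 (Fin n × ℕ) | IsCompactOperator ⇑A} := rfl
    rw [hset]
    exact isClosed_setOf_isCompactOperator.preimage continuous_subtype_val
  · intro a x hx
    constructor
    · have h : ((a * x : Cgen {T₁, T₂}) : ℓ2 (Fin n × ℕ) →L[ℂ] ℓ2 (Fin n × ℕ)) =
          ((a : ℓ2 (Fin n × ℕ) →L[ℂ] ℓ2 (Fin n × ℕ)).comp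
            (x : ℓ2 (Fin n × ℕ) →L[ℂ] ℓ2 (Fin n × ℕ))) := rfl
      rw [h, ContinuousLinearMap.coe_comp']
      exact hx.continuous_comp (ContinuousLinearMap.continuous _)
    · have h : ((x * a : Cgen {T₁, T₂}) : ℓ2 (Fin n × ℕ) →L[ℂ] ℓ2 (Fin n × ℕ)) =
          ((x : ℓ2 (Fin n × ℕ) →L[ℂ] ℓ2 (Fin n × ℕ)).comp
            (a : ℓ2 (Fin n × ℕ) →L[ℂ] ℓ2 (Fin n × ℕ))) := rfl
      rw [h, ContinuousLinearMap.coe_comp']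
      exact hx.comp_clm _
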